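/- For every integer k ≥ 5, the complex number (e^{2πi·(k−1)!/k} − 1)/(e^{−2πi·(1/k)} − 1) equals 1 if k is prime and equals 0 if k is not prime. (For prime k this follows since (k−1)! ≡ −1 (mod k) by Wilson's theorem, so e^{2πi(k−1)!/k} = e^{−2πi/k}; for composite k ≥ 5 one has k ∣ (k−1)!, so the numerator vanishes.) -/

import Mathlib

/-!
With `ψ j = exp (2πi j / k)` the standard additive character of `ZMod k`, the quotient is
`(ψ (k-1)! - 1) / (ψ (-1) - 1)`. For prime `k`, Wilson's theorem gives `(k-1)! = -1` in `ZMod k`,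
and `ψ (-1) ≠ 1` because `ψ` is injective. For composite `k ≠ 4`, two distinct factors of `k`
appear in `(k-1)!`, so `(k-1)! = 0` in `ZMod k` and the numerator is `ψ 0 - 1 = 0`.
-/

namespace Nat

theorem mul_dvd_factorial {a b n : ℕ} (ha : 0 < a) (hab : a < b) (hbn : b ≤ n) :
    a * b ∣ n ! := by
  have hb : b ! = b * (b - 1)! := (mul_factorial_pred (by omega)).symm
  calc a * b ∣ b ! := by
        rw [hb, mul_comm a]
        exact mul_dvd_mul_left b (dvd_factorial ha (by omega))
    _ ∣ n ! := factorial_dvd_factorial hbn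

theorem dvd_factorial_pred_of_not_prime {k : ℕ} (hk0 : k ≠ 0) (hk4 : k ≠ 4)
    (hk : ¬ k.Prime) : k ∣ (k - 1)! := by
  obtain rfl | hk1 := eq_or_ne k 1
  · simp
  have hp2 : 2 ≤ k.minFac := (minFac_prime hk1).two_le
  have hpm : k.minFac ≤ k / k.minFac := minFac_le_div (by omega) hk
  have hk_eq : k.minFac * (k / k.minFac) = k := Nat.mul_div_cancel' k.minFac_dvd
  generalize k.minFac = p, k / k.minFac = m at hp2 hpm hk_eq
  subst hk_eq
  rcases hpm.lt_or_eq with hlt | rfl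
  · exact mul_dvd_factorial (by omega) hlt (le_sub_one_of_lt (by nlinarith))
  · -- `k = p * p` with `p ≥ 3`, so `p < 2 * p ≤ k - 1` both occur in `(k - 1)!`
    have hp3 : 3 ≤ p := by
      by_contra h
      exact hk4 (by rw [show p = 2 by omega])
    calc p * p ∣ p * (2 * p) := ⟨2, by ring⟩
      _ ∣ (p * p - 1)! :=
        mul_dvd_factorial (by omega) (by omega) (le_sub_one_of_lt (by nlinarith))

end Nat

namespace Complex

theorem exp_two_pi_I_mul_natCast_div (k a : ℕ) [NeZero k] :
    exp (2 * Real.pi * I * ((a : ℂ) / k)) = ZMod.stdAddChar (a : ZMod k) := by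
  rw [ZMod.stdAddChar_apply, ZMod.toCircle_natCast, mul_div_assoc]

theorem exp_neg_two_pi_I_div (k : ℕ) [NeZero k] :
    exp (-(2 * Real.pi * I) / k) = ZMod.stdAddChar (-1 : ZMod k) := by
  rw [← Int.cast_one, ← Int.cast_neg, ZMod.stdAddChar_coe]
  push_cast
  ring_nf

end Complex

/-- **Term-by-term evaluation in Laurent's formula.**
For every integer `k ≥ 5`, `(e^{2πi·(k−1)!/k} − 1)/(e^{−2πi/k} − 1)` equals `1`
if `k` is prime and `0` if `k` is not prime. -/
theorem laurent_term_eval (k : ℕ) (hk : 5 ≤ k) :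
    (Complex.exp (2 * (Real.pi : ℂ) * Complex.I * ((Nat.factorial (k - 1) : ℂ) / k)) - 1) /
        (Complex.exp (-(2 * (Real.pi : ℂ) * Complex.I) / k) - 1) =
      if Nat.Prime k then 1 else 0 := by
  have : NeZero k := ⟨by omega⟩
  rw [Complex.exp_two_pi_I_mul_natCast_div k, Complex.exp_neg_two_pi_I_div]
  split_ifs with hp
  · have : Fact k.Prime := ⟨hp⟩
    have hψ : ZMod.stdAddChar (-1 : ZMod k) ≠ 1 := by
      rw [← (ZMod.stdAddChar (N := k)).map_zero_eq_one, ZMod.injective_stdAddChar.ne_iff]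
      exact neg_ne_zero.mpr one_ne_zero
    rw [ZMod.wilsons_lemma]
    exact div_self (sub_ne_zero.mpr hψ)
  · have hfac : ((k - 1).factorial : ZMod k) = 0 := (ZMod.natCast_eq_zero_iff _ k).mpr
      (Nat.dvd_factorial_pred_of_not_prime (by omega) (by omega) hp)
    rw [hfac, AddChar.map_zero_eq_one, sub_self, zero_div]
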